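/- arXiv:2112.01107 — 3 statements merged into one kernel-verified Lean document; each statement's English description precedes it below -/
import Mathlib

section
/- Let M be a real symmetric positive definite m×m matrix and let A be a real n×m matrix such that AᵀA is positive definite. Let y : ℝ → ℝᵐ be differentiable with y'(t) = -M⁻¹ AᵀA y(t) for all t ≥ 0. Then there exists λ > 0 such that for all t ≥ 0, y(t)ᵀ M y(t) ≤ exp(-λ t) · y(0)ᵀ M y(0); in particular y(t) → 0 exponentially fast as t → ∞. -/
/-!
Along a solution, `V = yᵀMy` has derivative `2 yᵀM y' = -2 yᵀ(AᵀA)y`, since `M` is symmetric and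
cancels `M⁻¹`. Comparing the two positive definite forms on the (compact) unit sphere gives
`c > 0` with `c · xᵀMx ≤ xᵀ(AᵀA)x`, so `V' ≤ -2c V`, and Grönwall's inequality yields
`V t ≤ exp (-2c t) V 0`.
-/

open Matrix Metric

section Derivatives

variable {𝕜 ι : Type*} [NontriviallyNormedField 𝕜] [Fintype ι] {t : 𝕜}

theorem HasDerivAt.dotProduct {u v : 𝕜 → ι → 𝕜} {u' v' : ι → 𝕜}
    (hu : HasDerivAt u u' t) (hv : HasDerivAt v v' t) :
    HasDerivAt (fun s => u s ⬝ᵥ v s) (u' ⬝ᵥ v t + u t ⬝ᵥ v') t := by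
  rw [_root_.dotProduct, _root_.dotProduct, ← Finset.sum_add_distrib]
  exact HasDerivAt.fun_sum fun i _ => (hasDerivAt_pi.1 hu i).fun_mul (hasDerivAt_pi.1 hv i)

theorem HasDerivAt.matrix_mulVec {κ : Type*} (M : Matrix κ ι 𝕜) {v : 𝕜 → ι → 𝕜} {v' : ι → 𝕜}
    (hv : HasDerivAt v v' t) : HasDerivAt (fun s => M *ᵥ v s) (M *ᵥ v') t :=
  hasDerivAt_pi.2 fun i =>
    HasDerivAt.fun_sum fun j _ => (hasDerivAt_pi.1 hv j).const_mul (M i j)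

theorem HasDerivAt.dotProduct_mulVec_self {M : Matrix ι ι 𝕜} (hM : M.IsSymm)
    {y : 𝕜 → ι → 𝕜} {y' : ι → 𝕜} (hy : HasDerivAt y y' t) :
    HasDerivAt (fun s => y s ⬝ᵥ (M *ᵥ y s)) (2 * (y t ⬝ᵥ (M *ᵥ y'))) t := by
  convert hy.dotProduct (hy.matrix_mulVec M) using 1
  rw [dotProduct_comm, dotProduct_mulVec, ← mulVec_transpose, hM.eq, two_mul]

end Derivatives

theorem le_exp_mul_mul_of_hasDerivAt_le {V V' : ℝ → ℝ} {K : ℝ}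
    (hV : ∀ t, 0 ≤ t → HasDerivAt V (V' t) t) (hV' : ∀ t, 0 ≤ t → V' t ≤ K * V t)
    {t : ℝ} (ht : 0 ≤ t) : V t ≤ Real.exp (K * t) * V 0 := by
  have := le_gronwallBound_of_liminf_deriv_right_le (f' := V') (ε := 0) (a := 0) (b := t)
    (fun s hs => (hV s hs.1).continuousAt.continuousWithinAt)
    (fun s hs _ hr => (hV s hs.1).hasDerivWithinAt.liminf_right_slope_le hr) le_rfl
    (fun s hs => by simpa using hV' s hs.1) t ⟨ht, le_rfl⟩
  rwa [gronwallBound_ε0, sub_zero, mul_comm] at this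

section QuadraticForms

variable {ι : Type*} [Fintype ι]

theorem dotProduct_mulVec_smul_self {R : Type*} [CommRing R]
    (C : Matrix ι ι R) (s : R) (x : ι → R) :
    (s • x) ⬝ᵥ (C *ᵥ (s • x)) = s ^ 2 * (x ⬝ᵥ (C *ᵥ x)) := by
  rw [mulVec_smul, smul_dotProduct, dotProduct_smul, smul_eq_mul, smul_eq_mul, ← mul_assoc, sq]

theorem continuous_dotProduct_mulVec_self (C : Matrix ι ι ℝ) :
    Continuous fun x : ι → ℝ => x ⬝ᵥ (C *ᵥ x) := by
  fun_prop

theorem Matrix.PosDef.exists_pos_mul_dotProduct_mulVec_le {M B : Matrix ι ι ℝ}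
    (hM : M.PosDef) (hB : B.PosDef) :
    ∃ c > 0, ∀ x, c * (x ⬝ᵥ (M *ᵥ x)) ≤ x ⬝ᵥ (B *ᵥ x) := by
  rcases isEmpty_or_nonempty ι with hι | hι
  · exact ⟨1, one_pos, fun x => by simp [Subsingleton.elim x 0]⟩
  have hM_pos : ∀ x ∈ sphere (0 : ι → ℝ) 1, 0 < x ⬝ᵥ (M *ᵥ x) := fun x hx =>
    hM.dotProduct_mulVec_pos (by rintro rfl; simp at hx)
  obtain ⟨u, hu, hmin⟩ := (isCompact_sphere (0 : ι → ℝ) 1).exists_isMinOn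
    (NormedSpace.sphere_nonempty.2 zero_le_one)
    ((continuous_dotProduct_mulVec_self B).continuousOn.div
      (continuous_dotProduct_mulVec_self M).continuousOn fun x hx => (hM_pos x hx).ne')
  refine ⟨u ⬝ᵥ (B *ᵥ u) / u ⬝ᵥ (M *ᵥ u),
    div_pos (hB.dotProduct_mulVec_pos (by rintro rfl; simp at hu)) (hM_pos u hu), fun x => ?_⟩
  rcases eq_or_ne x 0 with rfl | hx
  · simp
  have hx_sphere : ‖x‖⁻¹ • x ∈ sphere (0 : ι → ℝ) 1 := by
    simp [norm_smul, norm_ne_zero_iff.2 hx]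
  have key := isMinOn_iff.1 hmin _ hx_sphere
  rw [Pi.div_apply, Pi.div_apply, le_div_iff₀ (hM_pos _ hx_sphere), dotProduct_mulVec_smul_self,
    dotProduct_mulVec_smul_self, mul_left_comm] at key
  exact le_of_mul_le_mul_left key (by positivity)

end QuadraticForms

/-- Exponential stability of the boundary-layer system `ẏ = -M⁻¹AᵀA y`:
if `M` is real symmetric positive definite and `AᵀA` is positive definite, then along any
solution the Lyapunov function `yᵀMy` decays exponentially, i.e. there exists `λ > 0`
such that `y(t)ᵀ M y(t) ≤ exp(-λ t) y(0)ᵀ M y(0)` for all `t ≥ 0`. -/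
theorem stmt_5 (n m : ℕ) (M : Matrix (Fin m) (Fin m) ℝ) (A : Matrix (Fin n) (Fin m) ℝ)
    (hM : M.PosDef) (hA : (Aᵀ * A).PosDef)
    (y : ℝ → Fin m → ℝ)
    (hy : ∀ t : ℝ, 0 ≤ t → HasDerivAt y (-(M⁻¹ * (Aᵀ * A)) *ᵥ y t) t) :
    ∃ lam : ℝ, 0 < lam ∧ ∀ t : ℝ, 0 ≤ t →
      y t ⬝ᵥ (M *ᵥ y t) ≤ Real.exp (-lam * t) * (y 0 ⬝ᵥ (M *ᵥ y 0)) := by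
  obtain ⟨c, hc, hc_le⟩ := hM.exists_pos_mul_dotProduct_mulVec_le hA
  have hM_rhs : ∀ t, M *ᵥ (-(M⁻¹ * (Aᵀ * A)) *ᵥ y t) = -((Aᵀ * A) *ᵥ y t) := fun t => by
    rw [neg_mulVec, mulVec_neg, mulVec_mulVec,
      mul_nonsing_inv_cancel_left _ _ (isUnit_iff_ne_zero.2 hM.det_pos.ne')]
  refine ⟨2 * c, by positivity, fun t ht => ?_⟩
  refine le_exp_mul_mul_of_hasDerivAt_le
    (fun s hs => (hy s hs).dotProduct_mulVec_self (isHermitian_iff_isSymm.1 hM.1))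
    (fun s _ => ?_) ht
  rw [hM_rhs, dotProduct_neg]
  linarith [hc_le (y s)]
end

section
/- Let D and K̄ be m×m diagonal matrices, D with positive diagonal entries and K̄ with diagonal entries k̄₁,…,k̄ₘ > 0. Let f : ℝᵐ → ℝᵐ be continuously differentiable, let e ∈ ℝᵐ with e ≠ 0 and f(e) = -K̄ e, let τ* > 0, and let y : [0, τ*] → ℝᵐ satisfy y(0) = e and y'(s) = f(y(s)) for all s ∈ [0, τ*]. Suppose there are constants a, b > 0 such that ‖f(y(s))‖_{D,2} ≤ a ‖e‖_{D,2} and the operator norm of f'(y(s)) with respect to the norm ‖·‖_{D,2} is at most b ‖e‖_{D,2}, for all s ∈ [0, τ*]. Then for every τ ∈ [0, τ*], ‖y(τ)‖_{D,2} ≤ ( maxᵢ |1 - τ k̄ᵢ| + (1/2) a b ‖e‖_{D,2} τ² ) · ‖e‖_{D,2}. -/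
/-!
Weight coordinates by `d`, so that `‖·‖_{D,2}` becomes the Euclidean norm of `W x`, where
`W = weightedEuclidean d`. The curve `z = W ∘ y` has `z' = W (f ∘ y)` and
`z'' = W (f'(y) f(y))`, whose norm is at most `a b ‖e‖²`. Second-order Taylor
then gives `‖z τ - (z 0 + τ z' 0)‖ ≤ a b ‖e‖² τ² / 2`. The linear part is
`z 0 + τ z' 0 = W (e - τ K̄ e)`, i.e. the coordinates of `W e` scaled by `1 - τ k̄ᵢ`.
-/

open Set

theorem norm_image_sub_sub_smul_le_of_norm_deriv2_le_segment {E : Type*} [NormedAddCommGroup E]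
    [NormedSpace ℝ E] {g g' g'' : ℝ → E} {a b C : ℝ}
    (hg : ∀ x ∈ Icc a b, HasDerivWithinAt g (g' x) (Icc a b) x)
    (hg' : ∀ x ∈ Icc a b, HasDerivWithinAt g' (g'' x) (Icc a b) x)
    (bound : ∀ x ∈ Ico a b, ‖g'' x‖ ≤ C) :
    ∀ x ∈ Icc a b, ‖g x - g a - (x - a) • g' a‖ ≤ C / 2 * (x - a) ^ 2 := by
  have hg'_lip := norm_image_sub_le_of_norm_deriv_le_segment' hg' bound
  have hφ : ∀ x ∈ Icc a b, HasDerivWithinAt (fun x => g x - g a - (x - a) • g' a)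
      (g' x - g' a) (Icc a b) x := fun x hx => by
    have := ((hg x hx).sub_const (g a)).sub (((hasDerivAt_id x).sub_const a).smul_const
      (g' a)).hasDerivWithinAt
    rwa [one_smul] at this
  refine image_norm_le_of_norm_deriv_right_le_deriv_boundary
    (fun x hx => (hφ x hx).continuousWithinAt)
    (fun x hx =>
      (hφ x (Ico_subset_Icc_self hx)).mono_of_mem_nhdsWithin (Icc_mem_nhdsGE_of_mem hx))
    (B' := fun x => C * (x - a)) (by simp) (fun x => ?_)
    (fun x hx => hg'_lip x (Ico_subset_Icc_self hx))
  refine ((((hasDerivAt_id' x).sub_const a).fun_pow 2).const_mul (C / 2)).congr_deriv ?_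
  norm_num
  ring

noncomputable def weightedEuclidean {ι : Type*} [Fintype ι] (d : ι → ℝ) :
    (ι → ℝ) →L[ℝ] EuclideanSpace ℝ ι :=
  (EuclideanSpace.equiv ι ℝ).symm.toContinuousLinearMap ∘L
    ContinuousLinearMap.pi fun i => d i • ContinuousLinearMap.proj i

section
variable {ι : Type*} [Fintype ι]

@[simp]
theorem weightedEuclidean_apply (d x : ι → ℝ) (i : ι) : weightedEuclidean d x i = d i * x i :=
  rfl

theorem norm_weightedEuclidean (d x : ι → ℝ) :
    ‖weightedEuclidean d x‖ = √(∑ i, (d i * x i) ^ 2) := by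
  simp [EuclideanSpace.norm_eq, ← abs_mul]

theorem EuclideanSpace.norm_toLp_mul_le_sup' [Nonempty ι] (c : ι → ℝ) (u : EuclideanSpace ℝ ι) :
    ‖WithLp.toLp 2 (fun i => c i * u i)‖ ≤
      Finset.univ.sup' Finset.univ_nonempty (fun i => |c i|) * ‖u‖ := by
  set M := Finset.univ.sup' Finset.univ_nonempty (fun i => |c i|)
  have hc : ∀ i, |c i| ≤ M := fun i => Finset.le_sup' (fun i => |c i|) (Finset.mem_univ i)
  have hM : 0 ≤ M := (abs_nonneg _).trans (hc (Classical.arbitrary ι))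
  rw [EuclideanSpace.norm_eq, EuclideanSpace.norm_eq, ← Real.sqrt_sq hM,
    ← Real.sqrt_mul (sq_nonneg M), Finset.mul_sum]
  gcongr with i
  simp only [Real.norm_eq_abs, sq_abs, mul_pow]
  rw [← sq_abs (c i)]
  gcongr
  exact hc i
end

theorem stmt_8_general (m : ℕ) [NeZero m] (d k : Fin m → ℝ)
    (f : (Fin m → ℝ) → (Fin m → ℝ)) (hf : ContDiff ℝ 1 f)
    (e : Fin m → ℝ) (hfe : f e = fun i => -(k i * e i))
    (τstar : ℝ)
    (y : ℝ → Fin m → ℝ) (hy0 : y 0 = e)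
    (hy : ∀ s ∈ Set.Icc (0 : ℝ) τstar, HasDerivAt y (f (y s)) s)
    (a b : ℝ) (hb : 0 < b)
    (hfb : ∀ s ∈ Set.Icc (0 : ℝ) τstar,
      Real.sqrt (∑ i, (d i * f (y s) i) ^ 2) ≤ a * Real.sqrt (∑ i, (d i * e i) ^ 2))
    (hdb : ∀ s ∈ Set.Icc (0 : ℝ) τstar, ∀ v : Fin m → ℝ,
      Real.sqrt (∑ i, (d i * fderiv ℝ f (y s) v i) ^ 2) ≤
        b * Real.sqrt (∑ i, (d i * e i) ^ 2) * Real.sqrt (∑ i, (d i * v i) ^ 2)) :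
    ∀ τ ∈ Set.Icc (0 : ℝ) τstar,
      Real.sqrt (∑ i, (d i * y τ i) ^ 2) ≤
        (Finset.univ.sup' Finset.univ_nonempty (fun i => |1 - τ * k i|) +
            (1 / 2) * a * b * Real.sqrt (∑ i, (d i * e i) ^ 2) * τ ^ 2) *
          Real.sqrt (∑ i, (d i * e i) ^ 2) := by
  intro τ hτ
  simp only [← norm_weightedEuclidean] at hfb hdb ⊢
  set W := weightedEuclidean d
  set n := ‖W e‖
  have hWy : ∀ s ∈ Icc 0 τstar,
      HasDerivWithinAt (fun s => W (y s)) (W (f (y s))) (Icc 0 τstar) s :=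
    fun s hs => (W.hasFDerivAt.comp_hasDerivAt s (hy s hs)).hasDerivWithinAt
  have hWfy : ∀ s ∈ Icc 0 τstar, HasDerivWithinAt (fun s => W (f (y s)))
      (W (fderiv ℝ f (y s) (f (y s)))) (Icc 0 τstar) s := fun s hs =>
    have hfy := ((hf.differentiable one_ne_zero) (y s)).hasFDerivAt.comp_hasDerivAt s (hy s hs)
    (W.hasFDerivAt.comp_hasDerivAt s hfy).hasDerivWithinAt
  have hWfy_deriv :
      ∀ s ∈ Ico 0 τstar, ‖W (fderiv ℝ f (y s) (f (y s)))‖ ≤ a * b * n ^ 2 := fun s hs => calc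
    ‖W (fderiv ℝ f (y s) (f (y s)))‖ ≤ b * n * ‖W (f (y s))‖ :=
        hdb s (Ico_subset_Icc_self hs) _
    _ ≤ b * n * (a * n) := by gcongr; exact hfb s (Ico_subset_Icc_self hs)
    _ = a * b * n ^ 2 := by ring
  have hremainder := norm_image_sub_sub_smul_le_of_norm_deriv2_le_segment hWy hWfy hWfy_deriv τ hτ
  have hlinear : W e + τ • W (f e) = WithLp.toLp 2 (fun i => (1 - τ * k i) * W e i) := by
    ext i
    simp only [W, hfe, PiLp.add_apply, PiLp.smul_apply, weightedEuclidean_apply, smul_eq_mul]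
    ring
  calc ‖W (y τ)‖
      ≤ ‖W e + τ • W (f e)‖ + ‖W (y τ) - W (y 0) - (τ - 0) • W (f (y 0))‖ := by
        rw [hy0, sub_zero, sub_sub]; exact norm_le_insert' _ _
    _ ≤ Finset.univ.sup' Finset.univ_nonempty (fun i => |1 - τ * k i|) * n +
          a * b * n ^ 2 / 2 * τ ^ 2 := by
        rw [hlinear]
        gcongr
        · exact EuclideanSpace.norm_toLp_mul_le_sup' _ _
        · simpa using hremainder
    _ = _ := by ring

/-- Inequality (16) of the paper: for the auxiliary system `ė' = f(e')` with
`f(e) = -K̄ e`, if along the trajectory `‖f(y(s))‖_{D,2} ≤ a ‖e‖_{D,2}` and the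
`‖·‖_{D,2}`-operator norm of `f'(y(s))` is at most `b ‖e‖_{D,2}`, then
`‖y(τ)‖_{D,2} ≤ (maxᵢ |1 - τ k̄ᵢ| + (1/2) a b ‖e‖_{D,2} τ²) ‖e‖_{D,2}` on `[0, τ*]`.
Here `D`, `K̄` are diagonal with positive entries and `‖x‖_{D,2} = √(∑ i, (dᵢ xᵢ)²)`. -/
theorem stmt_8 (m : ℕ) [NeZero m] (d k : Fin m → ℝ)
    (hd : ∀ i, 0 < d i) (hk : ∀ i, 0 < k i)
    (f : (Fin m → ℝ) → (Fin m → ℝ)) (hf : ContDiff ℝ 1 f)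
    (e : Fin m → ℝ) (he : e ≠ 0) (hfe : f e = fun i => -(k i * e i))
    (τstar : ℝ) (hτstar : 0 < τstar)
    (y : ℝ → Fin m → ℝ) (hy0 : y 0 = e)
    (hy : ∀ s ∈ Set.Icc (0 : ℝ) τstar, HasDerivAt y (f (y s)) s)
    (a b : ℝ) (ha : 0 < a) (hb : 0 < b)
    (hfb : ∀ s ∈ Set.Icc (0 : ℝ) τstar,
      Real.sqrt (∑ i, (d i * f (y s) i) ^ 2) ≤ a * Real.sqrt (∑ i, (d i * e i) ^ 2))
    (hdb : ∀ s ∈ Set.Icc (0 : ℝ) τstar, ∀ v : Fin m → ℝ,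
      Real.sqrt (∑ i, (d i * fderiv ℝ f (y s) v i) ^ 2) ≤
        b * Real.sqrt (∑ i, (d i * e i) ^ 2) * Real.sqrt (∑ i, (d i * v i) ^ 2)) :
    ∀ τ ∈ Set.Icc (0 : ℝ) τstar,
      Real.sqrt (∑ i, (d i * y τ i) ^ 2) ≤
        (Finset.univ.sup' Finset.univ_nonempty (fun i => |1 - τ * k i|) +
            (1 / 2) * a * b * Real.sqrt (∑ i, (d i * e i) ^ 2) * τ ^ 2) *
          Real.sqrt (∑ i, (d i * e i) ^ 2) :=
  stmt_8_general m d k f hf e hfe τstar y hy0 hy a b hb hfb hdb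
end

section
/- Let D and K̄ be m×m diagonal matrices, D with positive diagonal entries and K̄ with diagonal entries k̄₁,…,k̄ₘ > 0, and let μ > 0. Define ĝ(τ) := maxᵢ |1 - τ k̄ᵢ| + μ τ², let τ̄_s > 0 be the unique positive solution of ĝ(τ̄_s) = 1, let τ̄_o ∈ [0, τ̄_s] be a minimizer of ĝ over [0, τ̄_s], and set ρ := ĝ(τ̄_o). Then: (i) 0 < τ̄_o and 0 ≤ ρ < 1; and (ii) for every e ∈ ℝᵐ and every function y : [0, τ̄_o] → ℝᵐ with y(0) = e satisfying ‖y(τ) - (I - τ K̄) e‖_{D,2} ≤ μ τ² ‖e‖_{D,2} for all τ ∈ [0, τ̄_o], one has ‖y(τ)‖_{D,2} ≤ ‖e‖_{D,2} for all τ ∈ [0, τ̄_o], and ‖y(τ̄_o)‖_{D,2} ≤ ρ ‖e‖_{D,2}. -/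
/-!
Write `ĝ(τ) = maxᵢ |1 - τ k̄ᵢ| + μτ²`. Since `I - τK̄` is diagonal, its operator norm for
`‖·‖_{D,2}` is `maxᵢ |1 - τ k̄ᵢ|`, so the triangle inequality with the remainder bound gives
`‖y(τ)‖_{D,2} ≤ ĝ(τ) ‖e‖_{D,2}`. As `ĝ` is convex with `ĝ(0) = ĝ(τ̄_s) = 1`, it is at most `1` on
`[0, τ̄_s]`; and `ĝ(τ) = 1 - τ(minᵢ k̄ᵢ - μτ) < 1` for small `τ > 0`, so the minimum `ρ` is `< 1`
and is not attained at `τ = 0`.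
-/

open Set Filter Topology

section

variable {ι : Type*} [Fintype ι]

noncomputable def weightedNorm (d x : ι → ℝ) : ℝ := √(∑ i, (d i * x i) ^ 2)

lemma weightedNorm_nonneg (d x : ι → ℝ) : 0 ≤ weightedNorm d x := Real.sqrt_nonneg _

lemma weightedNorm_add_le (d x y : ι → ℝ) :
    weightedNorm d (x + y) ≤ weightedNorm d x + weightedNorm d y := by
  have h := norm_add_le (E := EuclideanSpace ℝ ι) (WithLp.toLp 2 (d * x)) (WithLp.toLp 2 (d * y))
  simpa [weightedNorm, EuclideanSpace.norm_eq, mul_add, mul_pow, sq_abs] using h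

lemma weightedNorm_mul_le {d c x : ι → ℝ} {s : ℝ} (hs : 0 ≤ s) (hc : ∀ i, |c i| ≤ s) :
    weightedNorm d (c * x) ≤ s * weightedNorm d x := by
  rw [weightedNorm, weightedNorm, ← Real.sqrt_sq hs, ← Real.sqrt_mul (sq_nonneg s), Finset.mul_sum]
  gcongr with i
  calc (d i * (c i * x i)) ^ 2 = c i ^ 2 * (d i * x i) ^ 2 := by ring
    _ ≤ s ^ 2 * (d i * x i) ^ 2 :=
      mul_le_mul_of_nonneg_right (sq_le_sq.2 ((hc i).trans (le_abs_self s))) (sq_nonneg _)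

lemma weightedNorm_le_of_sub_mul_le {d c e y : ι → ℝ} {r s : ℝ} (hs : 0 ≤ s)
    (hc : ∀ i, |c i| ≤ s) (hy : weightedNorm d (y - c * e) ≤ r * weightedNorm d e) :
    weightedNorm d y ≤ (s + r) * weightedNorm d e :=
  calc weightedNorm d y = weightedNorm d ((y - c * e) + c * e) := by rw [sub_add_cancel]
    _ ≤ weightedNorm d (y - c * e) + weightedNorm d (c * e) := weightedNorm_add_le _ _ _
    _ ≤ r * weightedNorm d e + s * weightedNorm d e := add_le_add hy (weightedNorm_mul_le hs hc)
    _ = (s + r) * weightedNorm d e := by ring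

variable [Nonempty ι]

noncomputable def linearFactor (k : ι → ℝ) (τ : ℝ) : ℝ :=
  Finset.univ.sup' Finset.univ_nonempty fun i => |1 - τ * k i|

noncomputable def contractionBound (k : ι → ℝ) (μ τ : ℝ) : ℝ := linearFactor k τ + μ * τ ^ 2

lemma abs_one_sub_le_linearFactor (k : ι → ℝ) (τ : ℝ) (i : ι) :
    |1 - τ * k i| ≤ linearFactor k τ :=
  Finset.le_sup' (fun i => |1 - τ * k i|) (Finset.mem_univ i)

lemma linearFactor_nonneg (k : ι → ℝ) (τ : ℝ) : 0 ≤ linearFactor k τ :=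
  (abs_nonneg _).trans (abs_one_sub_le_linearFactor k τ (Classical.arbitrary ι))

lemma convexOn_linearFactor (k : ι → ℝ) : ConvexOn ℝ univ (linearFactor k) := by
  refine ⟨convex_univ, fun x _ y _ a b ha hb hab => Finset.sup'_le _ _ fun i _ => ?_⟩
  have h : 1 - (a • x + b • y) * k i = a * (1 - x * k i) + b * (1 - y * k i) := by
    simp only [smul_eq_mul]
    linear_combination -hab
  calc |1 - (a • x + b • y) * k i| ≤ a * |1 - x * k i| + b * |1 - y * k i| := by
        rw [h]
        refine (abs_add_le _ _).trans_eq ?_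
        rw [abs_mul, abs_mul, abs_of_nonneg ha, abs_of_nonneg hb]
    _ ≤ a • linearFactor k x + b • linearFactor k y := by
        simp only [smul_eq_mul]
        gcongr <;> exact abs_one_sub_le_linearFactor k _ i

lemma contractionBound_zero (k : ι → ℝ) (μ : ℝ) : contractionBound k μ 0 = 1 := by
  simp [contractionBound, linearFactor]

lemma contractionBound_nonneg (k : ι → ℝ) {μ : ℝ} (hμ : 0 ≤ μ) (τ : ℝ) :
    0 ≤ contractionBound k μ τ :=
  add_nonneg (linearFactor_nonneg k τ) (by positivity)

lemma convexOn_contractionBound (k : ι → ℝ) {μ : ℝ} (hμ : 0 ≤ μ) :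
    ConvexOn ℝ univ (contractionBound k μ) :=
  (convexOn_linearFactor k).add (even_two.convexOn_pow.smul hμ)

lemma contractionBound_le_one_of_mem_Icc (k : ι → ℝ) {μ τs τ : ℝ} (hμ : 0 ≤ μ)
    (hτs : contractionBound k μ τs = 1) (hτ : τ ∈ Icc 0 τs) : contractionBound k μ τ ≤ 1 := by
  have := (convexOn_contractionBound k hμ).le_on_segment (mem_univ 0) (mem_univ τs)
    (by rwa [segment_eq_Icc (hτ.1.trans hτ.2)])
  simpa [contractionBound_zero, hτs] using this

lemma eventually_contractionBound_lt_one {k : ι → ℝ} (hk : ∀ i, 0 < k i) (μ : ℝ) :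
    ∀ᶠ τ in 𝓝[>] 0, contractionBound k μ τ < 1 := by
  have hsmall : ∀ i, ∀ᶠ τ in 𝓝 (0 : ℝ), τ * k i < 1 ∧ μ * τ < k i := fun i =>
    ((continuous_id.mul continuous_const).tendsto' 0 0 (by simp)).eventually_lt_const one_pos
      |>.and (((continuous_const.mul continuous_id).tendsto' 0 0 (by simp)).eventually_lt_const
        (hk i))
  filter_upwards [self_mem_nhdsWithin, nhdsWithin_le_nhds (eventually_all.2 hsmall)]
    with τ (hτ : 0 < τ) hτk
  rw [contractionBound, ← lt_sub_iff_add_lt, linearFactor, Finset.sup'_lt_iff]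
  intro i _
  obtain ⟨h1, h2⟩ := hτk i
  rw [abs_of_pos (by linarith)]
  nlinarith

lemma weightedNorm_le_contractionBound_mul {d k e y : ι → ℝ} {μ τ : ℝ}
    (hy : weightedNorm d (y - (fun i => 1 - τ * k i) * e) ≤ μ * τ ^ 2 * weightedNorm d e) :
    weightedNorm d y ≤ contractionBound k μ τ * weightedNorm d e :=
  weightedNorm_le_of_sub_mul_le (linearFactor_nonneg k τ) (abs_one_sub_le_linearFactor k τ) hy

end

theorem stmt_12_general (m : ℕ) [NeZero m] (d k : Fin m → ℝ)
    (hk : ∀ i, 0 < k i) (μ : ℝ) (hμ : 0 < μ)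
    (τs τo ρ : ℝ) (hτs : 0 < τs)
    (hgs : Finset.univ.sup' Finset.univ_nonempty (fun i => |1 - τs * k i|) + μ * τs ^ 2 = 1)
    (hτo : τo ∈ Set.Icc 0 τs)
    (hmin : ∀ τ ∈ Set.Icc (0 : ℝ) τs,
      Finset.univ.sup' Finset.univ_nonempty (fun i => |1 - τo * k i|) + μ * τo ^ 2 ≤
        Finset.univ.sup' Finset.univ_nonempty (fun i => |1 - τ * k i|) + μ * τ ^ 2)
    (hρ : ρ = Finset.univ.sup' Finset.univ_nonempty (fun i => |1 - τo * k i|) + μ * τo ^ 2) :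
    (0 < τo ∧ 0 ≤ ρ ∧ ρ < 1) ∧
    ∀ (e : Fin m → ℝ) (y : ℝ → Fin m → ℝ), y 0 = e →
      (∀ τ ∈ Set.Icc (0 : ℝ) τo,
        Real.sqrt (∑ i, (d i * (y τ i - (1 - τ * k i) * e i)) ^ 2) ≤
          μ * τ ^ 2 * Real.sqrt (∑ i, (d i * e i) ^ 2)) →
      (∀ τ ∈ Set.Icc (0 : ℝ) τo,
        Real.sqrt (∑ i, (d i * y τ i) ^ 2) ≤ Real.sqrt (∑ i, (d i * e i) ^ 2)) ∧
      Real.sqrt (∑ i, (d i * y τo i) ^ 2) ≤ ρ * Real.sqrt (∑ i, (d i * e i) ^ 2) := by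
  change contractionBound k μ τs = 1 at hgs
  change ∀ τ ∈ Icc 0 τs, contractionBound k μ τo ≤ contractionBound k μ τ at hmin
  change ρ = contractionBound k μ τo at hρ
  obtain ⟨τ₁, hτ₁_lt, hτ₁_mem⟩ :=
    ((eventually_contractionBound_lt_one hk μ).and (Ioc_mem_nhdsGT hτs)).exists
  have hρ_lt : ρ < 1 := hρ ▸ (hmin τ₁ (Ioc_subset_Icc_self hτ₁_mem)).trans_lt hτ₁_lt
  have hτo_pos : 0 < τo := hτo.1.lt_of_ne fun h => by
    rw [hρ, ← h, contractionBound_zero] at hρ_lt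
    exact hρ_lt.false
  refine ⟨⟨hτo_pos, hρ ▸ contractionBound_nonneg k hμ.le τo, hρ_lt⟩, fun e y _ hy => ⟨?_, ?_⟩⟩
  · intro τ hτ
    exact (weightedNorm_le_contractionBound_mul (hy τ hτ)).trans <| mul_le_of_le_one_left
      (weightedNorm_nonneg d e)
      (contractionBound_le_one_of_mem_Icc k hμ.le hgs ⟨hτ.1, hτ.2.trans hτo.2⟩)
  · exact hρ ▸ weightedNorm_le_contractionBound_mul (hy τo ⟨hτo_pos.le, le_rfl⟩)

/-- Proposition 2 of the paper (offline pair `(τ̄_o, ρ)`): with `ĝ(τ) = maxᵢ |1 - τ k̄ᵢ| + μτ²`,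
`τ̄_s > 0` the unique positive solution of `ĝ(τ̄_s) = 1`, `τ̄_o` a minimizer of `ĝ` over
`[0, τ̄_s]` and `ρ = ĝ(τ̄_o)`, one has `0 < τ̄_o`, `0 ≤ ρ < 1`, and every trajectory
satisfying the Taylor-remainder bound `‖y(τ) - (I - τK̄)e‖_{D,2} ≤ μ τ² ‖e‖_{D,2}` on
`[0, τ̄_o]` with `y(0) = e` satisfies `‖y(τ)‖_{D,2} ≤ ‖e‖_{D,2}` on `[0, τ̄_o]` and
`‖y(τ̄_o)‖_{D,2} ≤ ρ ‖e‖_{D,2}`. Here `‖x‖_{D,2} = √(∑ i, (dᵢ xᵢ)²)`. -/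
theorem stmt_12 (m : ℕ) [NeZero m] (d k : Fin m → ℝ)
    (hd : ∀ i, 0 < d i) (hk : ∀ i, 0 < k i) (μ : ℝ) (hμ : 0 < μ)
    (τs τo ρ : ℝ) (hτs : 0 < τs)
    (hgs : Finset.univ.sup' Finset.univ_nonempty (fun i => |1 - τs * k i|) + μ * τs ^ 2 = 1)
    (hus : ∀ τ : ℝ, 0 < τ →
      Finset.univ.sup' Finset.univ_nonempty (fun i => |1 - τ * k i|) + μ * τ ^ 2 = 1 → τ = τs)
    (hτo : τo ∈ Set.Icc 0 τs)
    (hmin : ∀ τ ∈ Set.Icc (0 : ℝ) τs,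
      Finset.univ.sup' Finset.univ_nonempty (fun i => |1 - τo * k i|) + μ * τo ^ 2 ≤
        Finset.univ.sup' Finset.univ_nonempty (fun i => |1 - τ * k i|) + μ * τ ^ 2)
    (hρ : ρ = Finset.univ.sup' Finset.univ_nonempty (fun i => |1 - τo * k i|) + μ * τo ^ 2) :
    (0 < τo ∧ 0 ≤ ρ ∧ ρ < 1) ∧
    ∀ (e : Fin m → ℝ) (y : ℝ → Fin m → ℝ), y 0 = e →
      (∀ τ ∈ Set.Icc (0 : ℝ) τo,
        Real.sqrt (∑ i, (d i * (y τ i - (1 - τ * k i) * e i)) ^ 2) ≤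
          μ * τ ^ 2 * Real.sqrt (∑ i, (d i * e i) ^ 2)) →
      (∀ τ ∈ Set.Icc (0 : ℝ) τo,
        Real.sqrt (∑ i, (d i * y τ i) ^ 2) ≤ Real.sqrt (∑ i, (d i * e i) ^ 2)) ∧
      Real.sqrt (∑ i, (d i * y τo i) ^ 2) ≤ ρ * Real.sqrt (∑ i, (d i * e i) ^ 2) :=
  stmt_12_general m d k hk μ hμ τs τo ρ hτs hgs hτo hmin hρ
end
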